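/- Let T be the site of schemes with the v-topology (or any site in which X_red → X is a covering and monomorphism for all X). Then for every scheme X, the sheafified representable presheaves satisfy h^♯_{X_red} ≅ h^♯_X; consequently, for any multiplicative presheaf P on T the restriction map P(X) → P(X_red) is a bijection. In particular, the structure presheaf O (sending Spec A to A) is not a multiplicative presheaf on the v-site. -/
import Mathlib


open CategoryTheory Limits Opposite

universe u

variable {C : Type u} [SmallCategory C]

/-- A presheaf `P` on a Grothendieck site is *multiplicative* if for every set-indexed
family `{X_j}` of objects, the natural map
`Hom((∐_j h_{X_j})^♯, P) → Hom(∐_j h_{X_j}, P) ≅ ∏_j P(X_j)` is a bijection. -/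
def IsMultiplicative (J : GrothendieckTopology C) (P : Cᵒᵖ ⥤ Type u) : Prop :=
  ∀ (ι : Type u) (X : ι → C),
    Function.Bijective
      (fun (g : sheafify J (∐ fun j => yoneda.obj (X j)) ⟶ P) (j : ι) =>
        yonedaEquiv
          (Sigma.ι (fun j => yoneda.obj (X j)) j ≫
            toSheafify J (∐ fun j => yoneda.obj (X j)) ≫ g))

/-- Abstract form of the v-site example: in any site in which the (monomorphic)
inclusion of a "reduction" `i : X_red ⟶ X` generates a covering sieve, the sheafified
representables satisfy `h^♯_{X_red} ≅ h^♯_X`, and consequently every multiplicative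
presheaf `P` satisfies that `P(X) → P(X_red)` is a bijection.  (For the v-topology on
schemes, the structure presheaf `𝒪` fails this for any nonreduced affine scheme, so
`𝒪` is not multiplicative.) -/
theorem stmt_6 (J : GrothendieckTopology C) (Xred X : C) (i : Xred ⟶ X) [Mono i]
    (hcov : Sieve.generate (Presieve.singleton i) ∈ J X) :
    IsIso ((presheafToSheaf J (Type u)).map (yoneda.map i)) ∧
      ∀ P : Cᵒᵖ ⥤ Type u, IsMultiplicative J P → Function.Bijective (P.map i.op) := by

  -- `yoneda.map i` is locally injective since `i` is a monomorphism.
  have hinj : Presheaf.IsLocallyInjective J (yoneda.map i) := by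
    apply Presheaf.isLocallyInjective_of_injective
    intro U a b hab
    exact (cancel_mono i).1 hab
  -- `yoneda.map i` is locally surjective since the sieve generated by `i` is covering.
  have hsurj : Presheaf.IsLocallySurjective J (yoneda.map i) := by
    constructor
    intro U s
    apply J.superset_covering _ (J.pullback_stable s hcov)
    rintro V g ⟨Z, h, f, hf, fac⟩
    cases hf
    exact ⟨h, fac⟩
  have hW : J.W (yoneda.map i) := J.W_of_isLocallyBijective _
  have hiso : IsIso ((presheafToSheaf J (Type u)).map (yoneda.map i)) := (J.W_iff _).1 hW
  refine ⟨hiso, ?_⟩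
  intro P hP
  -- the single-element coproducts
  set SX : Cᵒᵖ ⥤ Type u := ∐ (fun _ : PUnit.{u + 1} => yoneda.obj X) with hSX
  set SR : Cᵒᵖ ⥤ Type u := ∐ (fun _ : PUnit.{u + 1} => yoneda.obj Xred) with hSR
  haveI hiX : IsIso (Sigma.ι (fun _ : PUnit.{u + 1} => yoneda.obj X) PUnit.unit) := by
    refine ⟨Sigma.desc (fun _ => 𝟙 _), by simp, ?_⟩
    apply Sigma.hom_ext
    rintro ⟨⟩
    simp
  haveI hiR : IsIso (Sigma.ι (fun _ : PUnit.{u + 1} => yoneda.obj Xred) PUnit.unit) := by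
    refine ⟨Sigma.desc (fun _ => 𝟙 _), by simp, ?_⟩
    apply Sigma.hom_ext
    rintro ⟨⟩
    simp
  set phi : SR ⟶ SX :=
    Sigma.desc (fun _ => yoneda.map i ≫ Sigma.ι (fun _ : PUnit.{u + 1} => yoneda.obj X)
      PUnit.unit) with hphi
  have hcomm : Sigma.ι (fun _ : PUnit.{u + 1} => yoneda.obj Xred) PUnit.unit ≫ phi =
      yoneda.map i ≫ Sigma.ι (fun _ : PUnit.{u + 1} => yoneda.obj X) PUnit.unit := by
    simp [hphi]
  have hphi_eq : phi = inv (Sigma.ι (fun _ : PUnit.{u + 1} => yoneda.obj Xred) PUnit.unit) ≫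
      (yoneda.map i ≫ Sigma.ι (fun _ : PUnit.{u + 1} => yoneda.obj X) PUnit.unit) := by
    rw [IsIso.eq_inv_comp, hcomm]
  haveI : IsIso ((presheafToSheaf J (Type u)).map phi) := by
    rw [hphi_eq]
    rw [Functor.map_comp, Functor.map_comp]
    infer_instance
  haveI : IsIso (sheafifyMap J phi) := by
    have : IsIso ((sheafToPresheaf J (Type u)).map ((presheafToSheaf J (Type u)).map phi)) :=
      inferInstance
    exact this
  -- the two evaluation bijections
  set eX : (sheafify J SX ⟶ P) → P.obj (op X) :=
    fun g => yonedaEquiv (Sigma.ι (fun _ : PUnit.{u + 1} => yoneda.obj X) PUnit.unit ≫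
      toSheafify J SX ≫ g) with heX
  set eR : (sheafify J SR ⟶ P) → P.obj (op Xred) :=
    fun g => yonedaEquiv (Sigma.ι (fun _ : PUnit.{u + 1} => yoneda.obj Xred) PUnit.unit ≫
      toSheafify J SR ≫ g) with heR
  have hbX : Function.Bijective eX := by
    have h1 := hP PUnit.{u + 1} (fun _ => X)
    exact ((Equiv.funUnique PUnit.{u + 1} (P.obj (op X))).bijective).comp h1
  have hbR : Function.Bijective eR := by
    have h1 := hP PUnit.{u + 1} (fun _ => Xred)
    exact ((Equiv.funUnique PUnit.{u + 1} (P.obj (op Xred))).bijective).comp h1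
  set c : (sheafify J SX ⟶ P) → (sheafify J SR ⟶ P) := fun g => sheafifyMap J phi ≫ g with hc
  have hbc : Function.Bijective c := by
    constructor
    · intro g₁ g₂ h
      simpa [hc] using congrArg (fun t => inv (sheafifyMap J phi) ≫ t) h
    · intro g
      exact ⟨inv (sheafifyMap J phi) ≫ g, by simp [hc]⟩
  -- the square commutes
  have hsquare : ∀ g : sheafify J SX ⟶ P, P.map i.op (eX g) = eR (c g) := by
    intro g
    rw [heX, heR]
    dsimp only
    rw [yonedaEquiv_naturality]
    congr 1
    rw [hc]
    dsimp only
    rw [← Category.assoc (toSheafify J SR), ← toSheafify_naturality]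
    simp only [← Category.assoc]
    rw [← hcomm]
  have heq : P.map i.op = eR ∘ c ∘ (Equiv.ofBijective eX hbX).symm := by
    funext y
    have := hsquare ((Equiv.ofBijective eX hbX).symm y)
    simpa [Equiv.ofBijective] using
      (congrArg (P.map i.op) ((Equiv.ofBijective eX hbX).apply_symm_apply y)).symm.trans this
  rw [heq]
  exact hbR.comp (hbc.comp (Equiv.ofBijective eX hbX).symm.bijective)
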